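/- Let λ be a real number and set B(κ) = (λ/30)(2e^{3iπκ} + 3e^{−2iπκ} − 30e^{iπκ} + 25). Then |1 + B(κ) + B(κ)²/2| ≤ 1 holds for all κ ∈ [−1,1] if and only if −15/14 ≤ λ ≤ 0. In other words, the third-order forward-first zigzag finite-difference scheme combined with the second-order Runge–Kutta time integrator is von Neumann stable for the advection equation exactly when the stability number λ lies in [−15/14, 0]; in particular it is conditionally stable with a stability interval of length greater than 1, while the third-order forward scheme is unconditionally unstable. -/

import Mathlib

/-- `Λ(κ) = (λ/30)(2e^{3iπκ} + 3e^{−2iπκ} − 30e^{iπκ} + 25)`, the amplification increment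
of the third-order forward-first zigzag scheme at scaled wavenumber `κ` and stability
number `λ`. -/
noncomputable def zigzag3Lambda (l κ : ℝ) : ℂ :=
  ((l / 30 : ℝ) : ℂ) * (2 * Complex.exp (3 * Complex.I * Real.pi * κ)
    + 3 * Complex.exp (-2 * Complex.I * Real.pi * κ)
    - 30 * Complex.exp (Complex.I * Real.pi * κ) + 25)

set_option maxHeartbeats 1000000 in
private lemma key_ineq (l c s X Y : ℝ) (h1 : -(15 / 14 : ℝ) ≤ l) (h2 : l ≤ 0)
    (hc1 : -1 ≤ c) (hc2 : c ≤ 1) (hs : s ^ 2 = 1 - c ^ 2)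
    (hX : X = l / 30 * (2 * (4 * c ^ 3 - 3 * c) + 3 * (2 * c ^ 2 - 1) - 30 * c + 25))
    (hY : Y = l / 30 * (2 * (3 * s - 4 * s ^ 3) - 3 * (2 * s * c) - 30 * s)) :
    (1 + X + (X ^ 2 - Y ^ 2) / 2) ^ 2 + (Y + X * Y) ^ 2 ≤ 1 := by
  obtain ⟨m, hml⟩ : ∃ m : ℝ, m = -(l / 30) := ⟨_, rfl⟩
  obtain ⟨R, hR⟩ : ∃ R : ℝ, R = 2 * (c - 1) ^ 2 * (4 * c + 11) := ⟨_, rfl⟩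
  obtain ⟨S2, hS2⟩ : ∃ S2 : ℝ, S2 = 4 * (1 - c ^ 2) * (4 * c ^ 2 - 3 * c - 16) ^ 2 := ⟨_, rfl⟩
  obtain ⟨Q, hQ⟩ : ∃ Q : ℝ, Q = R ^ 2 + S2 := ⟨_, rfl⟩
  have hm0 : 0 ≤ m := by rw [hml]; linarith
  have hm28 : m ≤ 1 / 28 := by rw [hml]; linarith
  have hX' : X = -(m * R) := by rw [hX, hml, hR]; ring
  have he : 2 * (3 * s - 4 * s ^ 3) - 3 * (2 * s * c) - 30 * s
      = s * (8 * c ^ 2 - 6 * c - 32) := by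
    linear_combination (-8 * s) * hs
  have hY2 : Y ^ 2 = m ^ 2 * S2 := by
    rw [hY, he, hml, hS2]
    linear_combination ((l / 30) ^ 2 * (8 * c ^ 2 - 6 * c - 32) ^ 2) * hs
  have hu : X ^ 2 + Y ^ 2 = m ^ 2 * Q := by
    rw [hQ]; linear_combination (X - m * R) * hX' + hY2
  have hq5 : (0 : ℝ) ≤ 288 * c ^ 5 + 288 * c ^ 4 - 2160 * c ^ 3 - 2988 * c ^ 2
      + 3782 * c + 9653 := by
    have a1 : (0 : ℝ) ≤ (1 + c) * (c ^ 4 - c ^ 3 + c ^ 2 - c + 1) := by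
      apply mul_nonneg (by linarith)
      nlinarith [sq_nonneg (c ^ 2 - c / 2), sq_nonneg (c - 2 / 3)]
    have a2 : (0 : ℝ) ≤ (1 - c) * (1 + c + c ^ 2) := by
      apply mul_nonneg (by linarith)
      nlinarith [sq_nonneg (c + 1 / 2)]
    have a3 : (0 : ℝ) ≤ (1 - c) * (1 + c) := mul_nonneg (by linarith) (by linarith)
    linarith [a1, a2, a3, sq_nonneg (c ^ 2), hc1]
  have hP : Q ^ 2 - 112 * Q * R + 6272 * R ^ 2 - 175616 * R ≤ 0 := by
    have hfac : Q ^ 2 - 112 * Q * R + 6272 * R ^ 2 - 175616 * R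
        = (c - 1) ^ 2 * (c + 1) * ((c ^ 2 - 1) * (128 * (288 * c ^ 5 + 288 * c ^ 4
          - 2160 * c ^ 3 - 2988 * c ^ 2 + 3782 * c + 9653)) + 19728 * c - 1033968) := by
      rw [hQ, hS2, hR]; ring
    rw [hfac]
    have hcc : (0 : ℝ) ≤ 1 - c ^ 2 := by nlinarith
    have hb : (c ^ 2 - 1) * (128 * (288 * c ^ 5 + 288 * c ^ 4 - 2160 * c ^ 3
        - 2988 * c ^ 2 + 3782 * c + 9653)) + 19728 * c - 1033968 ≤ 0 := by
      linarith [mul_nonneg hcc hq5, hc2]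
    have ha : (0 : ℝ) ≤ (c - 1) ^ 2 * (c + 1) := mul_nonneg (sq_nonneg _) (by linarith)
    linarith [mul_nonneg ha (neg_nonneg.2 hb)]
  have hmono : 0 ≤ (1 / 28 - m) * ((4 * R - Q * (1 / 28 + m)) ^ 2
      + Q ^ 2 * ((1 / 28) ^ 2 + m ^ 2)) :=
    mul_nonneg (by linarith) (by positivity)
  have hg : m ^ 3 * Q ^ 2 / 4 - m ^ 2 * R * Q + 2 * m * R ^ 2 - 2 * R ≤ 0 := by
    linarith [hP, hmono]
  have hgm : 0 ≤ m * -(m ^ 3 * Q ^ 2 / 4 - m ^ 2 * R * Q + 2 * m * R ^ 2 - 2 * R) :=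
    mul_nonneg hm0 (by linarith)
  have e1 : (1 + X + (X ^ 2 - Y ^ 2) / 2) ^ 2 + (Y + X * Y) ^ 2
      = 1 + (2 * X + 2 * X ^ 2 + X * (X ^ 2 + Y ^ 2) + (X ^ 2 + Y ^ 2) ^ 2 / 4) := by ring
  rw [e1, hu, hX']
  linarith [hgm]

/-- With `B(κ) = (λ/30)(2e^{3iπκ} + 3e^{−2iπκ} − 30e^{iπκ} + 25)`, the
RK2 amplification factor `G(κ) = 1 + B(κ) + B(κ)²/2` satisfies `|G(κ)| ≤ 1` for all
`κ ∈ [−1,1]` if and only if `−15/14 ≤ λ ≤ 0`: the third-order forward-first zigzag scheme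
with the RK2 time integrator is von Neumann stable exactly when `λ ∈ [−15/14, 0]`; in
particular it is conditionally stable with a stability interval of length greater
than `1`. -/
theorem rk2_zigzag3_stability (l : ℝ) :
    ((∀ κ ∈ Set.Icc (-1 : ℝ) 1,
        ‖1 + zigzag3Lambda l κ + zigzag3Lambda l κ ^ 2 / 2‖ ≤ 1)
      ↔ (-(15 / 14 : ℝ) ≤ l ∧ l ≤ 0)) ∧
    (1 : ℝ) < 15 / 14 := by
  refine ⟨⟨fun h => ?_, fun hl κ hκ => ?_⟩, by norm_num⟩
  · -- forward: evaluate at κ = 1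
    have h1 := h 1 ⟨by norm_num, le_refl 1⟩
    have hz : zigzag3Lambda l 1 = ((28 * l / 15 : ℝ) : ℂ) := by
      unfold zigzag3Lambda
      have e3 : Complex.exp (3 * Complex.I * (Real.pi : ℂ) * ((1 : ℝ) : ℂ)) = -1 := by
        rw [show (3 : ℂ) * Complex.I * (Real.pi : ℂ) * ((1 : ℝ) : ℂ)
            = ((3 : ℕ) : ℂ) * ((Real.pi : ℂ) * Complex.I) by push_cast; ring,
          Complex.exp_nat_mul, Complex.exp_pi_mul_I]
        norm_num
      have e2 : Complex.exp (-2 * Complex.I * (Real.pi : ℂ) * ((1 : ℝ) : ℂ)) = 1 := by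
        rw [show (-2 : ℂ) * Complex.I * (Real.pi : ℂ) * ((1 : ℝ) : ℂ)
            = ((-2 : ℤ) : ℂ) * ((Real.pi : ℂ) * Complex.I) by push_cast; ring,
          Complex.exp_int_mul, Complex.exp_pi_mul_I]
        norm_num
      have e1 : Complex.exp (Complex.I * (Real.pi : ℂ) * ((1 : ℝ) : ℂ)) = -1 := by
        rw [show Complex.I * (Real.pi : ℂ) * ((1 : ℝ) : ℂ)
            = (Real.pi : ℂ) * Complex.I by push_cast; ring,
          Complex.exp_pi_mul_I]
      rw [e3, e2, e1]
      push_cast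
      ring
    rw [hz] at h1
    have hcast : (1 : ℂ) + ((28 * l / 15 : ℝ) : ℂ) + ((28 * l / 15 : ℝ) : ℂ) ^ 2 / 2
        = (((1 + 28 * l / 15 + (28 * l / 15) ^ 2 / 2 : ℝ)) : ℂ) := by push_cast; ring
    rw [hcast, Complex.norm_real, Real.norm_eq_abs, abs_le] at h1
    obtain ⟨hlo, hhi⟩ := h1
    constructor
    · nlinarith [hhi, sq_nonneg (28 * l / 15 + 2)]
    · nlinarith [hhi, sq_nonneg (28 * l / 15)]
  · -- reverse direction
    obtain ⟨hl1, hl2⟩ := hl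
    obtain ⟨hκ1, hκ2⟩ := hκ
    have e3 : Complex.exp (3 * Complex.I * (Real.pi : ℂ) * (κ : ℂ))
        = ((Real.cos (3 * (Real.pi * κ)) : ℝ) : ℂ)
          + ((Real.sin (3 * (Real.pi * κ)) : ℝ) : ℂ) * Complex.I := by
      rw [show (3 : ℂ) * Complex.I * (Real.pi : ℂ) * (κ : ℂ)
          = ((3 * (Real.pi * κ) : ℝ) : ℂ) * Complex.I by push_cast; ring,
        Complex.exp_mul_I, ← Complex.ofReal_cos, ← Complex.ofReal_sin]
    have e2 : Complex.exp (-2 * Complex.I * (Real.pi : ℂ) * (κ : ℂ))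
        = ((Real.cos (2 * (Real.pi * κ)) : ℝ) : ℂ)
          - ((Real.sin (2 * (Real.pi * κ)) : ℝ) : ℂ) * Complex.I := by
      rw [show (-2 : ℂ) * Complex.I * (Real.pi : ℂ) * (κ : ℂ)
          = ((-(2 * (Real.pi * κ)) : ℝ) : ℂ) * Complex.I by push_cast; ring,
        Complex.exp_mul_I, ← Complex.ofReal_cos, ← Complex.ofReal_sin,
        Real.cos_neg, Real.sin_neg]
      push_cast
      ring
    have e1 : Complex.exp (Complex.I * (Real.pi : ℂ) * (κ : ℂ))
        = ((Real.cos (Real.pi * κ) : ℝ) : ℂ)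
          + ((Real.sin (Real.pi * κ) : ℝ) : ℂ) * Complex.I := by
      rw [show Complex.I * (Real.pi : ℂ) * (κ : ℂ)
          = ((Real.pi * κ : ℝ) : ℂ) * Complex.I by push_cast; ring,
        Complex.exp_mul_I, ← Complex.ofReal_cos, ← Complex.ofReal_sin]
    set X : ℝ := l / 30 * (2 * Real.cos (3 * (Real.pi * κ)) + 3 * Real.cos (2 * (Real.pi * κ))
        - 30 * Real.cos (Real.pi * κ) + 25) with hXdef
    set Y : ℝ := l / 30 * (2 * Real.sin (3 * (Real.pi * κ)) - 3 * Real.sin (2 * (Real.pi * κ))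
        - 30 * Real.sin (Real.pi * κ)) with hYdef
    have hz : zigzag3Lambda l κ = (X : ℂ) + (Y : ℂ) * Complex.I := by
      unfold zigzag3Lambda
      rw [e3, e2, e1, hXdef, hYdef]
      push_cast
      ring
    have hG : 1 + zigzag3Lambda l κ + zigzag3Lambda l κ ^ 2 / 2
        = ((1 + X + (X ^ 2 - Y ^ 2) / 2 : ℝ) : ℂ) + ((Y + X * Y : ℝ) : ℂ) * Complex.I := by
      rw [hz]
      push_cast
      linear_combination ((Y : ℂ) ^ 2 / 2) * Complex.I_sq
    have habs : ‖1 + zigzag3Lambda l κ + zigzag3Lambda l κ ^ 2 / 2‖ ^ 2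
        = (1 + X + (X ^ 2 - Y ^ 2) / 2) ^ 2 + (Y + X * Y) ^ 2 := by
      rw [hG, Complex.sq_norm, Complex.normSq_add_mul_I]
    have hkey : (1 + X + (X ^ 2 - Y ^ 2) / 2) ^ 2 + (Y + X * Y) ^ 2 ≤ 1 := by
      apply key_ineq l (Real.cos (Real.pi * κ)) (Real.sin (Real.pi * κ)) X Y hl1 hl2
        (Real.neg_one_le_cos _) (Real.cos_le_one _) (Real.sin_sq _)
      · rw [hXdef, Real.cos_three_mul, Real.cos_two_mul]
      · rw [hYdef, Real.sin_three_mul, Real.sin_two_mul]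
    have h2 : ‖1 + zigzag3Lambda l κ + zigzag3Lambda l κ ^ 2 / 2‖ ^ 2 ≤ 1 :=
      habs ▸ hkey
    exact (sq_le_one_iff₀ (norm_nonneg (1 + zigzag3Lambda l κ + zigzag3Lambda l κ ^ 2 / 2))).1 h2
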